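/- Let F = A₁|…|A_{n−d} be an ordered set partition of [n]. Then F is stable if and only if for every j ∈ [n−d] with |A_j| ≥ 2 and every pair of consecutive elements x < y of A_j, the fence f(x, y, ]x,y[ ∩ (A₁∪…∪A_{j−1})) does not belong to 𝓕. -/

import Mathlib

/-!
Lattice congruences of the weak order on `S_n`, encoded via fences.

Permutations of `[n] = {1, …, n}` are modeled as lists of natural numbers (sequences of
values) that enumerate `Finset.Icc 1 n` without repetition.
-/

/-- A fence, encoded by its defining triple `(a, b, L)`. -/
structure Fence where
  a : ℕ
  b : ℕ
  L : Finset ℕ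

/-- The triple `(a, b, L)` is a valid fence datum for `[n]`:
`1 ≤ a < b ≤ n` and `L ⊆ ]a,b[`. -/
def Fence.Valid (n : ℕ) (f : Fence) : Prop :=
  1 ≤ f.a ∧ f.a < f.b ∧ f.b ≤ n ∧ f.L ⊆ Finset.Ioo f.a f.b

/-- The forcing order on fences: `f' ⪯ f` iff `f'.a ≤ f.a < f.b ≤ f'.b` and
`f'.L ∩ ]f.a, f.b[ = f.L`. -/
def Fence.Forces (f' f : Fence) : Prop :=
  f'.a ≤ f.a ∧ f.b ≤ f'.b ∧ f'.L ∩ Finset.Ioo f.a f.b = f.L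

/-- `𝓕` is a downset of the forcing order on valid fences for `[n]`. -/
def IsFenceDownset (n : ℕ) (𝓕 : Set Fence) : Prop :=
  (∀ f ∈ 𝓕, f.Valid n) ∧
  ∀ f ∈ 𝓕, ∀ f' : Fence, f'.Valid n → f'.Forces f → f' ∈ 𝓕

/-- The unordered pair `{π₁, π₂}` belongs to the fence `f = f(a, b, L)`: `π₂` is obtained
from `π₁` by transposing two adjacent entries equal to `a` and `b`, every element of `L`
occurs to the left of those entries, and every element of `]a,b[ ∖ L` occurs to their
right. -/
def FenceRel (f : Fence) (π₁ π₂ : List ℕ) : Prop :=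
  ∃ u w : List ℕ,
    ((π₁ = u ++ f.a :: f.b :: w ∧ π₂ = u ++ f.b :: f.a :: w) ∨
     (π₁ = u ++ f.b :: f.a :: w ∧ π₂ = u ++ f.a :: f.b :: w)) ∧
    (∀ x ∈ f.L, x ∈ u) ∧
    (∀ x ∈ Finset.Ioo f.a f.b, x ∉ f.L → x ∈ w)

/-- The equivalence relation `≡` on permutations generated by the pairs belonging to some
fence in `𝓕`. -/
def PermEquiv (𝓕 : Set Fence) : List ℕ → List ℕ → Prop :=
  Relation.EqvGen (fun π₁ π₂ => ∃ f ∈ 𝓕, FenceRel f π₁ π₂)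

/-- `l` is (the list of values of) a permutation of `[n]`. -/
def IsPermList (n : ℕ) (l : List ℕ) : Prop :=
  l.Nodup ∧ ∀ x : ℕ, x ∈ l ↔ x ∈ Finset.Icc 1 n

/-- The restriction `≡*` of `≡` to permutations of `[n−1]`:
`σ ≡* π` iff `σ·n ≡ π·n`. -/
def PermEquivStar (n : ℕ) (𝓕 : Set Fence) (σ π : List ℕ) : Prop :=
  PermEquiv 𝓕 (σ ++ [n]) (π ++ [n])

/-- `P` is an ordered set partition with ground set `S`: a list of nonempty pairwise
disjoint finsets whose union is `S`. -/
def IsOSP (S : Finset ℕ) (P : List (Finset ℕ)) : Prop :=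
  (∀ B ∈ P, B.Nonempty) ∧ P.Pairwise Disjoint ∧ ∀ x : ℕ, x ∈ S ↔ ∃ B ∈ P, x ∈ B

/-- `l` is one of the permutations identified with the ordered set partition `P`: a
concatenation of enumerations of the blocks of `P`, in order. -/
def Linearizes (l : List ℕ) (P : List (Finset ℕ)) : Prop :=
  ∃ ls : List (List ℕ), l = ls.flatten ∧
    List.Forall₂ (fun (xs : List ℕ) (B : Finset ℕ) => xs.Nodup ∧ ∀ x : ℕ, x ∈ xs ↔ x ∈ B)
      ls P

/-- Equivalence of ordered set partitions relative to an equivalence `E` on permutations: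
every permutation in one is `E`-equivalent to some permutation in the other, and vice
versa. -/
def OSPEquivRel (E : List ℕ → List ℕ → Prop) (P Q : List (Finset ℕ)) : Prop :=
  (∀ l, Linearizes l P → ∃ m, Linearizes m Q ∧ E l m) ∧
  (∀ m, Linearizes m Q → ∃ l, Linearizes l P ∧ E l m)

/-- Equivalence of ordered set partitions of `[n]` under `≡`. -/
def OSPEquiv (𝓕 : Set Fence) : List (Finset ℕ) → List (Finset ℕ) → Prop :=
  OSPEquivRel (PermEquiv 𝓕)

/-- Equivalence of ordered set partitions of `[n−1]` under the restriction `≡*`. -/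
def OSPEquivStar (n : ℕ) (𝓕 : Set Fence) : List (Finset ℕ) → List (Finset ℕ) → Prop :=
  OSPEquivRel (PermEquivStar n 𝓕)

/-- `P` is stable (w.r.t. the ground set `S` and the congruence `≡` given by `𝓕`):
every ordered set partition of `S` equivalent to `P` has at most as many blocks. -/
def StableOSP (𝓕 : Set Fence) (S : Finset ℕ) (P : List (Finset ℕ)) : Prop :=
  ∀ Q, IsOSP S Q → OSPEquiv 𝓕 P Q → Q.length ≤ P.length

/-- `P` is stable under the restriction `≡*` (as an ordered set partition of `[n−1]`). -/
def StableOSPStar (n : ℕ) (𝓕 : Set Fence) (P : List (Finset ℕ)) : Prop :=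
  ∀ Q, IsOSP (Finset.Icc 1 (n - 1)) Q → OSPEquivStar n 𝓕 P Q → Q.length ≤ P.length

/-- The union of a list of blocks. -/
def blocksUnion (L : List (Finset ℕ)) : Finset ℕ := L.foldr (· ∪ ·) ∅

/-!
If `x < y` are consecutive in a block `B` and `f(x, y, ]x,y[ ∩ ⋃L)` lies in `𝓕`, splitting `B` into
`{z ∈ B | z ≤ x}` and `{z ∈ B | z ≥ y}` gives an equivalent partition with one more block: sorting a
linearization of `B` accordingly only swaps adjacent `a ≤ x` and `b ≥ y`, and the fence of such a
swap lies in `𝓕` because `f(x, y, ]x,y[ ∩ ⋃L)` forces it.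

Conversely, suppose `f(x, y, M)` is not in `𝓕`, with `M = ]x,y[ ∩ ⋃L`. Call a permutation rigid
if every `z ∈ ]x,y[` stands before both `x` and `y` when `z ∈ M`, after both otherwise. In a rigid
permutation, a fence swapping `x` or `y` with some `z ∈ ]x,y[ ∪ {x, y}` lies above `f(x, y, M)` in
the forcing order, hence outside the downset `𝓕`. So rigidity, and the relative order of `x` and
`y`, are invariant under `≡`. As `F` has rigid linearizations with `x` before `y` and with `y`
before `x`, every partition equivalent to `F` puts `x` and `y` in one block; chaining consecutive
pairs, each block of `F` lies inside one of its blocks, so it has at most as many blocks as `F`.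
-/

open Relation
open scoped List

theorem Relation.EqvGen.iff_of_rel {α : Type*} {r : α → α → Prop} {I : α → Prop}
    (h : ∀ a b, r a b → (I a ↔ I b)) {a b : α} (hab : EqvGen r a b) : I a ↔ I b :=
  (Equivalence.eqvGen_iff (r := fun a b => I a ↔ I b) ⟨fun _ => Iff.rfl, Iff.symm, Iff.trans⟩).1
    (EqvGen.mono h a b hab)

namespace List

variable {α : Type*}

theorem pair_sublist_cons {p q c : α} {l : List α} :
    [p, q] <+ c :: l ↔ (p = c ∧ q ∈ l) ∨ [p, q] <+ l := by
  simp [sublist_cons_iff, eq_comm, or_comm]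

theorem pair_sublist_append {p q : α} {l₁ l₂ : List α} :
    [p, q] <+ l₁ ++ l₂ ↔ [p, q] <+ l₁ ∨ (p ∈ l₁ ∧ q ∈ l₂) ∨ [p, q] <+ l₂ := by
  induction l₁ with
  | nil => simp
  | cons c l₁ ih =>
    simp only [cons_append, pair_sublist_cons, ih, mem_cons, mem_append]
    tauto

theorem Nodup.not_pair_sublist_swap {p q : α} {l : List α} (hl : l.Nodup) (h : [p, q] <+ l) :
    ¬[q, p] <+ l := by
  induction l with
  | nil => simp at h
  | cons c l ih =>
    obtain ⟨hc, hl⟩ := nodup_cons.1 hl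
    have mem_of_sublist : ∀ {a b}, [a, b] <+ l → a ∈ l ∧ b ∈ l := fun h =>
      ⟨h.subset mem_cons_self, h.subset (mem_cons_of_mem _ mem_cons_self)⟩
    rw [pair_sublist_cons] at h ⊢
    rintro (⟨rfl, hp⟩ | h')
    · rcases h with ⟨rfl, -⟩ | h
      · exact hc hp
      · exact hc (mem_of_sublist h).2
    · rcases h with ⟨rfl, -⟩ | h
      · exact hc (mem_of_sublist h').2
      · exact ih hl h h'

theorem pair_sublist_append_swap_iff {p q a b : α} {u w : List α}
    (hab : ¬(p = a ∧ q = b)) (hba : ¬(p = b ∧ q = a)) :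
    [p, q] <+ u ++ a :: b :: w ↔ [p, q] <+ u ++ b :: a :: w := by
  simp only [pair_sublist_append, pair_sublist_cons, mem_cons]
  tauto

def AdmitsSwaps (p : α → Bool) (r : List α → List α → Prop) (s : List α) : Prop :=
  ∀ t₁ t₂ a b, (t₁ ++ b :: a :: t₂).Perm s → p a → p b = false →
    r (t₁ ++ b :: a :: t₂) (t₁ ++ a :: b :: t₂)

namespace AdmitsSwaps

variable {p : α → Bool} {r : List α → List α → Prop}

theorem of_perm {s s' : List α} (h : AdmitsSwaps p r s) (hs : s'.Perm s) : AdmitsSwaps p r s' :=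
  fun t₁ t₂ a b ht => h t₁ t₂ a b (ht.trans hs)

theorem tail {c : α} {s : List α} (h : AdmitsSwaps p r (c :: s)) :
    AdmitsSwaps p (fun m m' => r (c :: m) (c :: m')) s :=
  fun t₁ t₂ a b ht => h (c :: t₁) t₂ a b (ht.cons c)

theorem reflTransGen_cons_append {b : α} {t u : List α} (h : AdmitsSwaps p r (b :: (t ++ u)))
    (hb : p b = false) (ht : ∀ a ∈ t, p a) : ReflTransGen r (b :: (t ++ u)) (t ++ b :: u) := by
  induction t generalizing r with
  | nil => rfl
  | cons a t ih =>
    have hswap : r (b :: a :: (t ++ u)) (a :: b :: (t ++ u)) :=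
      h [] (t ++ u) a b (Perm.refl _) (ht a mem_cons_self) hb
    have hmove := ih (h.of_perm (Perm.swap b a _)).tail fun a' ha' => ht a' (mem_cons_of_mem _ ha')
    exact .head hswap (ReflTransGen.lift (a :: ·) (fun _ _ => id) _ _ hmove)

theorem reflTransGen_filter {s : List α} (h : AdmitsSwaps p r s) :
    ReflTransGen r s (s.filter p ++ s.filter (fun a => !p a)) := by
  induction s generalizing r with
  | nil => rfl
  | cons c s ih =>
    have hsort := ReflTransGen.lift (c :: ·) (fun _ _ => id) _ _ (ih h.tail)
    cases hc : p c
    · have hmove := reflTransGen_cons_append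
        (h.of_perm ((filter_append_perm p s).cons c)) hc fun a ha => (mem_filter.1 ha).2
      simpa [filter_cons, hc] using hsort.trans hmove
    · simpa [filter_cons, hc] using hsort

end AdmitsSwaps

end List

@[simp]
theorem blocksUnion_nil : blocksUnion [] = ∅ := rfl

@[simp]
theorem blocksUnion_cons (C : Finset ℕ) (L : List (Finset ℕ)) :
    blocksUnion (C :: L) = C ∪ blocksUnion L := rfl

theorem mem_blocksUnion {L : List (Finset ℕ)} {z : ℕ} : z ∈ blocksUnion L ↔ ∃ C ∈ L, z ∈ C := by
  induction L with
  | nil => simp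
  | cons C L ih => simp [ih]

theorem eq_of_mem_of_pairwise_disjoint {α : Type*} {Q : List (Finset α)}
    (hQ : Q.Pairwise Disjoint) {C D : Finset α} (hC : C ∈ Q) (hD : D ∈ Q) {z : α}
    (hzC : z ∈ C) (hzD : z ∈ D) : C = D := by
  by_contra hne
  exact Finset.disjoint_left.1 (hQ.forall hC hD hne) hzC hzD

theorem exists_block_or_split {Q : List (Finset ℕ)} {x y : ℕ} (hx : x ∈ blocksUnion Q)
    (hy : y ∈ blocksUnion Q) :
    (∃ C ∈ Q, x ∈ C ∧ y ∈ C) ∨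
      (∃ Q₁ Q₂, Q = Q₁ ++ Q₂ ∧ x ∈ blocksUnion Q₁ ∧ y ∈ blocksUnion Q₂) ∨
      (∃ Q₁ Q₂, Q = Q₁ ++ Q₂ ∧ y ∈ blocksUnion Q₁ ∧ x ∈ blocksUnion Q₂) := by
  induction Q with
  | nil => simp at hx
  | cons C Q ih =>
    rw [blocksUnion_cons, Finset.mem_union] at hx hy
    by_cases hxC : x ∈ C <;> by_cases hyC : y ∈ C
    · exact .inl ⟨C, List.mem_cons_self, hxC, hyC⟩
    · exact .inr (.inl ⟨[C], Q, rfl, by simp [hxC], hy.resolve_left hyC⟩)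
    · exact .inr (.inr ⟨[C], Q, rfl, by simp [hyC], hx.resolve_left hxC⟩)
    · rcases ih (hx.resolve_left hxC) (hy.resolve_left hyC) with
        ⟨D, hD, h⟩ | ⟨Q₁, Q₂, rfl, h₁, h₂⟩ | ⟨Q₁, Q₂, rfl, h₁, h₂⟩
      · exact .inl ⟨D, List.mem_cons_of_mem _ hD, h⟩
      · exact .inr (.inl ⟨C :: Q₁, Q₂, rfl, by simp [h₁], h₂⟩)
      · exact .inr (.inr ⟨C :: Q₁, Q₂, rfl, by simp [h₁], h₂⟩)

theorem IsOSP.split {S : Finset ℕ} {L R : List (Finset ℕ)} {B A₁ A₂ : Finset ℕ}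
    (hP : IsOSP S (L ++ B :: R)) (h₁ : A₁.Nonempty) (h₂ : A₂.Nonempty) (hd : Disjoint A₁ A₂)
    (hA : A₁ ∪ A₂ = B) : IsOSP S (L ++ A₁ :: A₂ :: R) := by
  obtain ⟨hne, hdisj, hcov⟩ := hP
  have hA₁ : A₁ ⊆ B := hA ▸ Finset.subset_union_left
  have hA₂ : A₂ ⊆ B := hA ▸ Finset.subset_union_right
  refine ⟨?_, ?_, fun z => ?_⟩
  · simp only [List.mem_append, List.mem_cons] at hne ⊢
    rintro C (hC | rfl | rfl | hC)
    exacts [hne C (.inl hC), h₁, h₂, hne C (.inr (.inr hC))]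
  · simp only [List.pairwise_append, List.pairwise_cons, List.mem_cons] at hdisj ⊢
    obtain ⟨hL, ⟨hB, hR⟩, hLB⟩ := hdisj
    refine ⟨hL, ⟨?_, fun C hC => (hB C hC).mono_left hA₂, hR⟩, ?_⟩
    · rintro C (rfl | hC)
      exacts [hd, (hB C hC).mono_left hA₁]
    · rintro C hC D (rfl | rfl | hD)
      exacts [(hLB C hC B (.inl rfl)).mono_right hA₁, (hLB C hC B (.inl rfl)).mono_right hA₂,
        hLB C hC D (.inr hD)]
  · rw [hcov]
    simp only [List.mem_append, List.mem_cons, ← hA]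
    aesop

section Linearizes

variable {m : List ℕ} {P Q : List (Finset ℕ)}

theorem linearizes_append_iff :
    Linearizes m (P ++ Q) ↔ ∃ m₁ m₂, m = m₁ ++ m₂ ∧ Linearizes m₁ P ∧ Linearizes m₂ Q := by
  constructor
  · rintro ⟨ls, rfl, h⟩
    exact ⟨(ls.take P.length).flatten, (ls.drop P.length).flatten,
      by rw [← List.flatten_append, List.take_append_drop],
      ⟨_, rfl, List.forall₂_take_append _ _ _ h⟩, ⟨_, rfl, List.forall₂_drop_append _ _ _ h⟩⟩
  · rintro ⟨_, _, rfl, ⟨ls₁, rfl, h₁⟩, ⟨ls₂, rfl, h₂⟩⟩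
    exact ⟨ls₁ ++ ls₂, List.flatten_append.symm, List.rel_append h₁ h₂⟩

theorem linearizes_cons_iff {B : Finset ℕ} :
    Linearizes m (B :: Q) ↔
      ∃ s m', m = s ++ m' ∧ (s.Nodup ∧ ∀ z, z ∈ s ↔ z ∈ B) ∧ Linearizes m' Q := by
  constructor
  · rintro ⟨_, rfl, h⟩
    obtain ⟨s, ls, hs, hls, rfl⟩ := List.forall₂_cons_right_iff.1 h
    exact ⟨s, _, List.flatten_cons, hs, ls, rfl, hls⟩
  · rintro ⟨s, _, rfl, hs, ls, rfl, h⟩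
    exact ⟨s :: ls, List.flatten_cons.symm, .cons hs h⟩

theorem Linearizes.mem_iff (h : Linearizes m P) {z : ℕ} : z ∈ m ↔ z ∈ blocksUnion P := by
  induction P generalizing m with
  | nil => obtain ⟨_, rfl, h⟩ := h; simp [List.forall₂_nil_right_iff.1 h]
  | cons B P ih =>
    obtain ⟨s, m', rfl, hs, h⟩ := linearizes_cons_iff.1 h
    simp [hs.2, ih h]

theorem Linearizes.nodup (h : Linearizes m P) (hP : P.Pairwise Disjoint) : m.Nodup := by
  induction P generalizing m with
  | nil => obtain ⟨_, rfl, h⟩ := h; simp [List.forall₂_nil_right_iff.1 h]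
  | cons B P ih =>
    obtain ⟨s, m', rfl, hs, h⟩ := linearizes_cons_iff.1 h
    obtain ⟨hB, hP⟩ := List.pairwise_cons.1 hP
    refine List.nodup_append.2 ⟨hs.1, ih h hP, fun z hz z' hz' hzz => ?_⟩
    obtain ⟨C, hC, hz'C⟩ := mem_blocksUnion.1 (h.mem_iff.1 hz')
    exact Finset.disjoint_left.1 (hB C hC) ((hs.2 z).1 hz) (hzz ▸ hz'C)

theorem Linearizes.pair_sublist (h : Linearizes m (P ++ Q)) {p q : ℕ} (hp : p ∈ blocksUnion P)
    (hq : q ∈ blocksUnion Q) : [p, q] <+ m := by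
  obtain ⟨m₁, m₂, rfl, h₁, h₂⟩ := linearizes_append_iff.1 h
  exact List.pair_sublist_append.2 (.inr (.inl ⟨h₁.mem_iff.2 hp, h₂.mem_iff.2 hq⟩))

theorem exists_linearizes (P : List (Finset ℕ)) : ∃ m, Linearizes m P :=
  ⟨_, _, rfl, List.forall₂_map_left_iff.2
    (List.forall₂_same.2 fun C _ => ⟨C.nodup_toList, fun _ => C.mem_toList⟩)⟩

end Linearizes

theorem IsOSP.mem_iff {S : Finset ℕ} {P : List (Finset ℕ)} (hP : IsOSP S P) {z : ℕ} :
    z ∈ S ↔ z ∈ blocksUnion P :=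
  (hP.2.2 z).trans mem_blocksUnion.symm

theorem IsOSP.length_le_of_forall_subset {S : Finset ℕ} {P Q : List (Finset ℕ)}
    (hP : IsOSP S P) (hQ : IsOSP S Q) (h : ∀ A ∈ P, ∃ C ∈ Q, A ⊆ C) : Q.length ≤ P.length := by
  classical
  have hQnd : Q.Nodup := hQ.2.1.imp_of_mem fun hC _ hd heq => by
    subst heq
    obtain ⟨z, hz⟩ := hQ.1 _ hC
    exact Finset.disjoint_left.1 hd hz hz
  calc Q.length = Q.toFinset.card := (List.toFinset_card_of_nodup hQnd).symm
    _ ≤ P.toFinset.card :=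
      Finset.card_le_card_of_forall_subsingleton (fun C A => ¬Disjoint C A) ?_ ?_
    _ ≤ P.length := List.toFinset_card_le P
  · intro C hC
    rw [List.mem_toFinset] at hC
    obtain ⟨z, hz⟩ := hQ.1 C hC
    obtain ⟨A, hA, hzA⟩ := (hP.2.2 z).1 ((hQ.2.2 z).2 ⟨C, hC, hz⟩)
    exact ⟨A, List.mem_toFinset.2 hA, Finset.not_disjoint_iff.2 ⟨z, hz, hzA⟩⟩
  · intro A hA
    obtain ⟨E, hE, hAE⟩ := h A (List.mem_toFinset.1 hA)
    have eq_E : ∀ C ∈ Q.toFinset, ¬Disjoint C A → C = E := fun C hC hCA => by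
      obtain ⟨z, hzC, hzA⟩ := Finset.not_disjoint_iff.1 hCA
      exact eq_of_mem_of_pairwise_disjoint hQ.2.1 (List.mem_toFinset.1 hC) hE hzC (hAE hzA)
    rintro C₁ ⟨hC₁, h₁⟩ C₂ ⟨hC₂, h₂⟩
    rw [eq_E C₁ hC₁ h₁, eq_E C₂ hC₂ h₂]

theorem Finset.rel_of_rel_consecutive {α : Type*} [LinearOrder α] {r : α → α → Prop}
    (hr : Equivalence r) {A : Finset α}
    (h : ∀ x ∈ A, ∀ y ∈ A, x < y → (∀ z ∈ A, ¬(x < z ∧ z < y)) → r x y) :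
    ∀ x ∈ A, ∀ y ∈ A, r x y := by
  classical
  induction A using Finset.induction_on_max with
  | empty => simp
  | insert m s hm ih =>
    have hs := ih fun x hx y hy hxy hcons => h x (mem_insert_of_mem hx) y (mem_insert_of_mem hy)
      hxy fun z hz => (mem_insert.1 hz).elim (fun hzm hzy => (hm y hy).not_gt (hzm ▸ hzy.2))
        (hcons z)
    have to_max : ∀ x ∈ s, r x m := fun x hx => by
      have hw := s.max'_mem ⟨x, hx⟩
      have hwm : r (s.max' ⟨x, hx⟩) m := h _ (mem_insert_of_mem hw) m (mem_insert_self m s)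
        (hm _ hw) fun z hz hzm => (mem_insert.1 hz).elim (fun hz => hzm.2.ne hz)
          fun hz => (s.le_max' z hz).not_gt hzm.1
      exact hr.trans (hs x hx _ hw) hwm
    intro x hx y hy
    rcases mem_insert.1 hx with rfl | hxs <;> rcases mem_insert.1 hy with rfl | hys
    exacts [hr.refl _, hr.symm (to_max y hys), to_max x hxs, hs x hxs y hys]

section Fences

variable {n : ℕ} {𝓕 : Set Fence} {f : Fence} {π π' : List ℕ}

theorem FenceRel.symm (h : FenceRel f π π') : FenceRel f π' π := by
  obtain ⟨u, w, h | h, hL, hW⟩ := h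
  exacts [⟨u, w, .inr h.symm, hL, hW⟩, ⟨u, w, .inl h.symm, hL, hW⟩]

theorem FenceRel.perm (h : FenceRel f π π') : π.Perm π' := by
  obtain ⟨u, w, ⟨rfl, rfl⟩ | ⟨rfl, rfl⟩, -⟩ := h <;> exact .append_left u (.swap _ _ w)

theorem FenceRel.pair_sublist_iff (h : FenceRel f π π') {p q : ℕ} (hab : ¬(p = f.a ∧ q = f.b))
    (hba : ¬(p = f.b ∧ q = f.a)) : [p, q] <+ π ↔ [p, q] <+ π' := by
  obtain ⟨u, w, ⟨rfl, rfl⟩ | ⟨rfl, rfl⟩, -⟩ := h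
  exacts [List.pair_sublist_append_swap_iff hab hba, List.pair_sublist_append_swap_iff hba hab]

theorem fenceRel_swap {u v : ℕ} {pre suf : List ℕ}
    (hcover : ∀ z ∈ Finset.Ioo u v, z ∈ pre ∨ z ∈ suf) :
    FenceRel ⟨u, v, (Finset.Ioo u v).filter (· ∈ pre)⟩ (pre ++ v :: u :: suf)
      (pre ++ u :: v :: suf) :=
  ⟨pre, suf, .inr ⟨rfl, rfl⟩, fun _ hz => (Finset.mem_filter.1 hz).2,
    fun z hz hzL => (hcover z hz).resolve_left fun h => hzL (Finset.mem_filter.2 ⟨hz, h⟩)⟩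

theorem IsFenceDownset.exists_fenceRel_swap (hdown : IsFenceDownset n 𝓕) {x y : ℕ}
    {M : Finset ℕ} (hmem : ⟨x, y, M⟩ ∈ 𝓕) {a b : ℕ} (ha : 1 ≤ a) (hax : a ≤ x) (hyb : y ≤ b)
    (hb : b ≤ n) {pre suf : List ℕ} (hpre : ∀ z ∈ Finset.Ioo x y, z ∈ pre ↔ z ∈ M)
    (hcover : ∀ z ∈ Finset.Ioo a b, z ∈ pre ∨ z ∈ suf) :
    ∃ f ∈ 𝓕, FenceRel f (pre ++ b :: a :: suf) (pre ++ a :: b :: suf) := by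
  obtain ⟨-, hxy, -, hM⟩ : 1 ≤ x ∧ x < y ∧ y ≤ n ∧ M ⊆ Finset.Ioo x y := hdown.1 _ hmem
  have hvalid : Fence.Valid n ⟨a, b, (Finset.Ioo a b).filter (· ∈ pre)⟩ :=
    ⟨ha, show a < b by omega, hb, Finset.filter_subset _ _⟩
  refine ⟨_, hdown.2 _ hmem _ hvalid ⟨hax, hyb, ?_⟩, fenceRel_swap hcover⟩
  ext z
  simp only [Finset.mem_inter, Finset.mem_filter]
  refine ⟨fun ⟨⟨_, hz⟩, hzxy⟩ => (hpre z hzxy).1 hz, fun hzM => ?_⟩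
  have hzxy := hM hzM
  have hzab : z ∈ Finset.Ioo a b := by simp only [Finset.mem_Ioo] at hzxy ⊢; omega
  exact ⟨⟨hzab, (hpre z hzxy).2 hzM⟩, hzxy⟩

end Fences

section Stability

variable {n : ℕ} {𝓕 : Set Fence} {f : Fence} {π π' : List ℕ} {x y : ℕ} {M : Finset ℕ}

theorem IsFenceDownset.permEquiv_partition (hdown : IsFenceDownset n 𝓕) (hmem : ⟨x, y, M⟩ ∈ 𝓕)
    {pre s suf : List ℕ} (hpre : ∀ z ∈ Finset.Ioo x y, z ∈ pre ↔ z ∈ M)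
    (hs : ∀ z ∈ s, 1 ≤ z ∧ z ≤ n ∧ (z ≤ x ∨ y ≤ z))
    (hcover : ∀ z ∈ Finset.Icc 1 n, z ∈ pre ∨ z ∈ s ∨ z ∈ suf) :
    PermEquiv 𝓕 (pre ++ (s ++ suf))
      (pre ++ (s.filter (· ≤ x) ++ (s.filter (fun z => !decide (z ≤ x)) ++ suf))) := by
  have hswap : List.AdmitsSwaps (· ≤ x)
      (fun m m' => ∃ f ∈ 𝓕, FenceRel f (pre ++ (m ++ suf)) (pre ++ (m' ++ suf))) s := by
    intro t₁ t₂ a b hperm ha hb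
    have hmem_s : ∀ z, z ∈ t₁ ++ b :: a :: t₂ ↔ z ∈ s := fun z => hperm.mem_iff
    obtain ⟨ha1, -, -⟩ := hs a ((hmem_s a).1 (by simp))
    obtain ⟨-, hbn, hxb | hyb⟩ := hs b ((hmem_s b).1 (by simp))
    · exact absurd hxb (decide_eq_false_iff_not.1 hb)
    simp only [decide_eq_true_eq] at ha
    have hpre' : ∀ z ∈ Finset.Ioo x y, z ∈ pre ++ t₁ ↔ z ∈ M := fun z hz => by
      have hzt : z ∉ t₁ := fun h => by
        have := hs z ((hmem_s z).1 (List.mem_append_left _ h))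
        simp only [Finset.mem_Ioo] at hz; omega
      simp [hzt, hpre z hz]
    have hcover' : ∀ z ∈ Finset.Ioo a b, z ∈ pre ++ t₁ ∨ z ∈ t₂ ++ suf := fun z hz => by
      simp only [Finset.mem_Ioo] at hz
      have hza : z ≠ a := by omega
      have hzb : z ≠ b := by omega
      have := hcover z (Finset.mem_Icc.2 ⟨by omega, by omega⟩)
      rw [← hmem_s] at this
      simp only [List.mem_append, List.mem_cons, hza, hzb, false_or] at this ⊢
      tauto
    simpa using hdown.exists_fenceRel_swap hmem ha1 ha hyb hbn hpre' hcover'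
  have hsort := ReflTransGen.lift (fun m => pre ++ (m ++ suf))
    (p := fun π₁ π₂ => ∃ f ∈ 𝓕, FenceRel f π₁ π₂) (fun _ _ => id) _ _ hswap.reflTransGen_filter
  unfold PermEquiv
  simpa only [List.append_assoc] using EqvGen.reflTransGen_le_eqvGen _ _ _ hsort

def Rigid (x y : ℕ) (M : Finset ℕ) (π : List ℕ) : Prop :=
  π.Nodup ∧ ∀ z ∈ Finset.Ioo x y, ∀ e, (e = x ∨ e = y) →
    (z ∈ M → [z, e] <+ π) ∧ (z ∉ M → [e, z] <+ π)

namespace Rigid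

/-- The endpoint `e ∈ {x, y}` of the swapped pair separates `f.L` from the rest of `]f.a, f.b[`
just as rigidity makes it separate `M` from the rest of `]x, y[`. -/
theorem forces (hR : Rigid x y M π) (hrel : FenceRel f π π') (hfL : f.L ⊆ Finset.Ioo f.a f.b)
    (hxa : x ≤ f.a) (hby : f.b ≤ y) (hend : f.a = x ∨ f.b = y) : Fence.Forces ⟨x, y, M⟩ f := by
  obtain ⟨u, w, hπ, hL, hW⟩ := hrel
  obtain ⟨e, he, hef⟩ : ∃ e, (e = x ∨ e = y) ∧ (e = f.a ∨ e = f.b) := by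
    rcases hend with h | h
    exacts [⟨x, .inl rfl, .inl h.symm⟩, ⟨y, .inr rfl, .inr h.symm⟩]
  have before_e : ∀ z ∈ u, [z, e] <+ π := fun z hz => by
    rcases hπ with ⟨rfl, -⟩ | ⟨rfl, -⟩ <;> rcases hef with rfl | rfl <;>
      simp [List.pair_sublist_append, hz]
  have after_e : ∀ z ∈ w, [e, z] <+ π := fun z hz => by
    rcases hπ with ⟨rfl, -⟩ | ⟨rfl, -⟩ <;> rcases hef with rfl | rfl <;>
      simp [hz]
  have hIoo : ∀ z ∈ Finset.Ioo f.a f.b, z ∈ Finset.Ioo x y := fun z hz => by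
    simp only [Finset.mem_Ioo] at hz ⊢; omega
  refine ⟨hxa, hby, Finset.ext fun z => ⟨fun hz => ?_, fun hz => ?_⟩⟩
  · obtain ⟨hzM, hz⟩ := Finset.mem_inter.1 hz
    by_contra hzL
    exact hR.1.not_pair_sublist_swap ((hR.2 z (hIoo z hz) e he).1 hzM) (after_e z (hW z hz hzL))
  · refine Finset.mem_inter.2 ⟨?_, hfL hz⟩
    by_contra hzM
    exact hR.1.not_pair_sublist_swap (before_e z (hL z hz)) ((hR.2 z (hIoo z (hfL hz)) e he).2 hzM)

variable (hdown : IsFenceDownset n 𝓕) (hv : Fence.Valid n ⟨x, y, M⟩) (hnot : ⟨x, y, M⟩ ∉ 𝓕)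
include hdown hv hnot

theorem pair_sublist_iff_of_fenceRel (hR : Rigid x y M π) (hf : f ∈ 𝓕) (hrel : FenceRel f π π')
    {p q : ℕ} (hxp : x ≤ p) (hpq : p < q) (hqy : q ≤ y) (hend : p = x ∨ q = y) :
    ([p, q] <+ π ↔ [p, q] <+ π') ∧ ([q, p] <+ π ↔ [q, p] <+ π') := by
  obtain ⟨-, hab, -, hfL⟩ := hdown.1 f hf
  have hne : ¬(p = f.a ∧ q = f.b) := by
    rintro ⟨rfl, rfl⟩
    exact hnot (hdown.2 f hf _ hv (hR.forces hrel hfL hxp hqy hend))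
  exact ⟨hrel.pair_sublist_iff hne (by omega), hrel.pair_sublist_iff (by omega) fun h => hne h.symm⟩

theorem of_fenceRel (hR : Rigid x y M π) (hf : f ∈ 𝓕) (hrel : FenceRel f π π') :
    Rigid x y M π' := by
  refine ⟨hrel.perm.nodup_iff.1 hR.1, fun z hz e he => ?_⟩
  obtain ⟨hxz, hzy⟩ := Finset.mem_Ioo.1 hz
  obtain ⟨hin, hout⟩ := hR.2 z hz e he
  rcases he with rfl | rfl
  · have h := hR.pair_sublist_iff_of_fenceRel hdown hv hnot hf hrel le_rfl hxz hzy.le (.inl rfl)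
    exact ⟨fun hzM => h.2.1 (hin hzM), fun hzM => h.1.1 (hout hzM)⟩
  · have h := hR.pair_sublist_iff_of_fenceRel hdown hv hnot hf hrel hxz.le hzy le_rfl (.inr rfl)
    exact ⟨fun hzM => h.1.1 (hin hzM), fun hzM => h.2.1 (hout hzM)⟩

theorem and_pair_sublist_iff_of_permEquiv {p q : ℕ} (hpq : p = x ∧ q = y ∨ p = y ∧ q = x)
    (h : PermEquiv 𝓕 π π') : Rigid x y M π ∧ [p, q] <+ π ↔ Rigid x y M π' ∧ [p, q] <+ π' := by
  have step : ∀ π π', (∃ f ∈ 𝓕, FenceRel f π π') →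
      Rigid x y M π ∧ [p, q] <+ π → Rigid x y M π' ∧ [p, q] <+ π' := by
    rintro π π' ⟨f, hf, hrel⟩ ⟨hR, hπ⟩
    have h := hR.pair_sublist_iff_of_fenceRel hdown hv hnot hf hrel le_rfl hv.2.1 le_rfl (.inl rfl)
    refine ⟨hR.of_fenceRel hdown hv hnot hf hrel, ?_⟩
    rcases hpq with ⟨rfl, rfl⟩ | ⟨rfl, rfl⟩
    exacts [h.1.1 hπ, h.2.1 hπ]
  exact h.iff_of_rel fun π π' hr =>
    ⟨step π π' hr, step π' π (hr.imp fun _ hf => ⟨hf.1, hf.2.symm⟩)⟩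

end Rigid

variable {L R : List (Finset ℕ)} {B : Finset ℕ}

theorem rigid_of_linearizes (hP : IsOSP (Finset.Icc 1 n) (L ++ B :: R)) (hx : x ∈ B) (hy : y ∈ B)
    (hcons : ∀ z ∈ B, ¬(x < z ∧ z < y)) {mL s mR : List ℕ} (hmL : Linearizes mL L)
    (hs : s.Nodup ∧ ∀ z, z ∈ s ↔ z ∈ B) (hmR : Linearizes mR R) :
    Rigid x y (Finset.Ioo x y ∩ blocksUnion L) (mL ++ (s ++ mR)) := by
  have hlin : Linearizes (mL ++ (s ++ mR)) (L ++ B :: R) :=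
    linearizes_append_iff.2 ⟨_, _, rfl, hmL, linearizes_cons_iff.2 ⟨_, _, rfl, hs, hmR⟩⟩
  refine ⟨hlin.nodup hP.2.1, fun z hz e he => ⟨fun hzM => ?_, fun hzM => ?_⟩⟩ <;>
    have hes : e ∈ s := (hs.2 e).2 (by rcases he with rfl | rfl <;> assumption)
  · have hzL : z ∈ mL := hmL.mem_iff.2 (Finset.mem_inter.1 hzM).2
    exact List.pair_sublist_append.2 (.inr (.inl ⟨hzL, List.mem_append_left _ hes⟩))
  · have hzn : z ∈ Finset.Icc 1 n := by
      have := hP.mem_iff.2 (mem_blocksUnion.2 ⟨B, by simp, hx⟩)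
      have := hP.mem_iff.2 (mem_blocksUnion.2 ⟨B, by simp, hy⟩)
      simp only [Finset.mem_Icc, Finset.mem_Ioo] at *
      omega
    have hzR : z ∈ mR := by
      obtain ⟨C, hC, hzC⟩ := mem_blocksUnion.1 (hP.mem_iff.1 hzn)
      simp only [List.mem_append, List.mem_cons] at hC
      rcases hC with hC | rfl | hC
      · exact absurd (Finset.mem_inter.2 ⟨hz, mem_blocksUnion.2 ⟨C, hC, hzC⟩⟩) hzM
      · exact absurd (Finset.mem_Ioo.1 hz) (hcons z hzC)
      · exact hmR.mem_iff.2 (mem_blocksUnion.2 ⟨C, hC, hzC⟩)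
    exact List.pair_sublist_append.2
      (.inr (.inr (List.pair_sublist_append.2 (.inr (.inl ⟨hes, hzR⟩)))))

theorem exists_rigid_linearizes (hP : IsOSP (Finset.Icc 1 n) (L ++ B :: R)) (hx : x ∈ B)
    (hy : y ∈ B) (hcons : ∀ z ∈ B, ¬(x < z ∧ z < y)) {p q : ℕ} (hp : p ∈ B) (hq : q ∈ B)
    (hpq : p ≠ q) :
    ∃ m, Linearizes m (L ++ B :: R) ∧ Rigid x y (Finset.Ioo x y ∩ blocksUnion L) m ∧
      [p, q] <+ m := by
  obtain ⟨mL, hmL⟩ := exists_linearizes L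
  obtain ⟨mR, hmR⟩ := exists_linearizes R
  have hs : (p :: (B.erase p).toList).Nodup ∧ ∀ z, z ∈ p :: (B.erase p).toList ↔ z ∈ B :=
    ⟨List.nodup_cons.2 ⟨by simp, Finset.nodup_toList _⟩, fun z => by
      by_cases hz : z = p <;> simp [hz, hp]⟩
  refine ⟨_, linearizes_append_iff.2 ⟨_, _, rfl, hmL, linearizes_cons_iff.2 ⟨_, _, rfl, hs, hmR⟩⟩,
    rigid_of_linearizes hP hx hy hcons hmL hs hmR, ?_⟩
  simp [hq, hpq.symm]

theorem exists_block_of_consecutive (hdown : IsFenceDownset n 𝓕)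
    (hP : IsOSP (Finset.Icc 1 n) (L ++ B :: R)) (hx : x ∈ B) (hy : y ∈ B) (hxy : x < y)
    (hcons : ∀ z ∈ B, ¬(x < z ∧ z < y))
    (hnot : (⟨x, y, Finset.Ioo x y ∩ blocksUnion L⟩ : Fence) ∉ 𝓕) {Q : List (Finset ℕ)}
    (hQ : IsOSP (Finset.Icc 1 n) Q) (hequiv : OSPEquiv 𝓕 (L ++ B :: R) Q) :
    ∃ C ∈ Q, x ∈ C ∧ y ∈ C := by
  have hxn := hP.mem_iff.2 (mem_blocksUnion.2 ⟨B, by simp, hx⟩)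
  have hyn := hP.mem_iff.2 (mem_blocksUnion.2 ⟨B, by simp, hy⟩)
  have hv : Fence.Valid n ⟨x, y, Finset.Ioo x y ∩ blocksUnion L⟩ :=
    ⟨(Finset.mem_Icc.1 hxn).1, hxy, (Finset.mem_Icc.1 hyn).2, Finset.inter_subset_left⟩
  have ordered : ∀ p q, (p = x ∧ q = y ∨ p = y ∧ q = x) →
      ∃ μ, Linearizes μ Q ∧ μ.Nodup ∧ [p, q] <+ μ := by
    intro p q hpq
    obtain ⟨hp, hq, hne⟩ : p ∈ B ∧ q ∈ B ∧ p ≠ q := by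
      rcases hpq with ⟨rfl, rfl⟩ | ⟨rfl, rfl⟩ <;> exact ⟨‹_›, ‹_›, by omega⟩
    obtain ⟨m, hm, hR, hpqm⟩ := exists_rigid_linearizes hP hx hy hcons hp hq hne
    obtain ⟨μ, hμ, hmμ⟩ := hequiv.1 m hm
    obtain ⟨hRμ, hpqμ⟩ :=
      (Rigid.and_pair_sublist_iff_of_permEquiv hdown hv hnot hpq hmμ).1 ⟨hR, hpqm⟩
    exact ⟨μ, hμ, hRμ.1, hpqμ⟩
  obtain ⟨μ₁, hμ₁, hnd₁, hxy₁⟩ := ordered x y (.inl ⟨rfl, rfl⟩)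
  obtain ⟨μ₂, hμ₂, hnd₂, hyx₂⟩ := ordered y x (.inr ⟨rfl, rfl⟩)
  rcases exists_block_or_split (hQ.mem_iff.1 hxn) (hQ.mem_iff.1 hyn) with
    h | ⟨Q₁, Q₂, rfl, hx', hy'⟩ | ⟨Q₁, Q₂, rfl, hy', hx'⟩
  · exact h
  · exact absurd hyx₂ (hnd₂.not_pair_sublist_swap (hμ₂.pair_sublist hx' hy'))
  · exact absurd hxy₁ (hnd₁.not_pair_sublist_swap (hμ₁.pair_sublist hy' hx'))

theorem exists_superset_of_forall_consecutive (hdown : IsFenceDownset n 𝓕)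
    (hP : IsOSP (Finset.Icc 1 n) (L ++ B :: R))
    (hgood : ∀ x ∈ B, ∀ y ∈ B, x < y → (∀ z ∈ B, ¬(x < z ∧ z < y)) →
      (⟨x, y, Finset.Ioo x y ∩ blocksUnion L⟩ : Fence) ∉ 𝓕)
    {Q : List (Finset ℕ)} (hQ : IsOSP (Finset.Icc 1 n) Q) (hequiv : OSPEquiv 𝓕 (L ++ B :: R) Q) :
    ∃ C ∈ Q, B ⊆ C := by
  obtain ⟨a, ha⟩ := hP.1 B (by simp)
  obtain ⟨C, hC, haC⟩ := (hQ.2.2 a).1 ((hP.2.2 a).2 ⟨B, by simp, ha⟩)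
  have hsame : ∀ u ∈ B, ∀ v ∈ B, ∀ D ∈ Q, u ∈ D ↔ v ∈ D := by
    refine Finset.rel_of_rel_consecutive ⟨fun _ _ _ => .rfl, fun h D hD => (h D hD).symm,
      fun h₁ h₂ D hD => (h₁ D hD).trans (h₂ D hD)⟩ fun u hu v hv huv hcons D hD => ?_
    obtain ⟨E, hE, huE, hvE⟩ := exists_block_of_consecutive hdown hP hu hv huv hcons
      (hgood u hu v hv huv hcons) hQ hequiv
    exact ⟨fun huD => eq_of_mem_of_pairwise_disjoint hQ.2.1 hE hD huE huD ▸ hvE,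
      fun hvD => eq_of_mem_of_pairwise_disjoint hQ.2.1 hE hD hvE hvD ▸ huE⟩
  exact ⟨C, hC, fun b hb => (hsame a ha b hb C hC).1 haC⟩

theorem ospEquiv_split_block (hdown : IsFenceDownset n 𝓕)
    (hP : IsOSP (Finset.Icc 1 n) (L ++ B :: R)) (hy : y ∈ B) (hcons : ∀ z ∈ B, ¬(x < z ∧ z < y))
    (hmem : (⟨x, y, Finset.Ioo x y ∩ blocksUnion L⟩ : Fence) ∈ 𝓕) :
    OSPEquiv 𝓕 (L ++ B :: R) (L ++ B.filter (· ≤ x) :: B.filter (¬· ≤ x) :: R) := by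
  refine ⟨fun m hm => ?_, fun m hm => ⟨m, ?_, EqvGen.refl m⟩⟩
  · obtain ⟨mL, _, rfl, hmL, hm⟩ := linearizes_append_iff.1 hm
    obtain ⟨s, mR, rfl, hs, hmR⟩ := linearizes_cons_iff.1 hm
    refine ⟨_, linearizes_append_iff.2 ⟨_, _, rfl, hmL, linearizes_cons_iff.2 ⟨_, _, rfl,
      ⟨hs.1.filter _, by simp [hs.2]⟩, linearizes_cons_iff.2 ⟨_, _, rfl,
      ⟨hs.1.filter _, by simp [hs.2]⟩, hmR⟩⟩⟩, hdown.permEquiv_partition hmem ?_ ?_ ?_⟩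
    · intro z hz
      simp [hmL.mem_iff, hz]
    · intro z hz
      have hzB := (hs.2 z).1 hz
      have := hP.mem_iff.2 (mem_blocksUnion.2 ⟨B, by simp, hzB⟩)
      have := hcons z hzB
      simp only [Finset.mem_Icc] at *
      omega
    · intro z hz
      obtain ⟨C, hC, hzC⟩ := mem_blocksUnion.1 (hP.mem_iff.1 hz)
      simp only [List.mem_append, List.mem_cons] at hC
      rcases hC with hC | rfl | hC
      exacts [.inl (hmL.mem_iff.2 (mem_blocksUnion.2 ⟨C, hC, hzC⟩)), .inr (.inl ((hs.2 z).2 hzC)),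
        .inr (.inr (hmR.mem_iff.2 (mem_blocksUnion.2 ⟨C, hC, hzC⟩)))]
  · obtain ⟨mL, _, rfl, hmL, hm⟩ := linearizes_append_iff.1 hm
    obtain ⟨s₁, _, rfl, hs₁, hm⟩ := linearizes_cons_iff.1 hm
    obtain ⟨s₂, mR, rfl, hs₂, hmR⟩ := linearizes_cons_iff.1 hm
    have hs : (s₁ ++ s₂).Nodup ∧ ∀ z, z ∈ s₁ ++ s₂ ↔ z ∈ B := by
      refine ⟨List.nodup_append.2 ⟨hs₁.1, hs₂.1, fun z hz₁ z' hz₂ hzz => ?_⟩, fun z => ?_⟩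
      · have hzx : z ≤ x := (Finset.mem_filter.1 ((hs₁.2 z).1 hz₁)).2
        have hz'x : ¬z' ≤ x := (Finset.mem_filter.1 ((hs₂.2 z').1 hz₂)).2
        exact hz'x (hzz ▸ hzx)
      · simp only [List.mem_append, hs₁.2, hs₂.2, Finset.mem_filter]
        tauto
    simpa using linearizes_append_iff.2 ⟨_, _, rfl, hmL, linearizes_cons_iff.2 ⟨_, _, rfl, hs, hmR⟩⟩

theorem not_stableOSP_of_mem (hdown : IsFenceDownset n 𝓕)
    (hP : IsOSP (Finset.Icc 1 n) (L ++ B :: R)) (hx : x ∈ B) (hy : y ∈ B) (hxy : x < y)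
    (hcons : ∀ z ∈ B, ¬(x < z ∧ z < y))
    (hmem : (⟨x, y, Finset.Ioo x y ∩ blocksUnion L⟩ : Fence) ∈ 𝓕) :
    ¬StableOSP 𝓕 (Finset.Icc 1 n) (L ++ B :: R) := by
  intro hst
  have hQ := hP.split (A₁ := B.filter (· ≤ x)) (A₂ := B.filter (¬· ≤ x)) ⟨x, by simp [hx]⟩
    ⟨y, by simp [hy, hxy]⟩ (Finset.disjoint_filter_filter_not _ _ _)
    (Finset.filter_union_filter_not_eq _ _)
  have := hst _ hQ (ospEquiv_split_block hdown hP hy hcons hmem)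
  simp at this

end Stability

/-- An ordered set partition `F` of `[n]` is stable if and only if for every block `B`
(with prefix `L` of earlier blocks) and every pair of consecutive elements `x < y` of
`B`, the fence `f(x, y, ]x,y[ ∩ ⋃L)` does not belong to `𝓕`. -/
theorem stable_iff_no_consecutive_fence (n : ℕ) (𝓕 : Set Fence)
    (hdown : IsFenceDownset n 𝓕)
    (P : List (Finset ℕ)) (hP : IsOSP (Finset.Icc 1 n) P) :
    StableOSP 𝓕 (Finset.Icc 1 n) P ↔
      ∀ (L : List (Finset ℕ)) (B : Finset ℕ) (R : List (Finset ℕ)),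
        P = L ++ B :: R →
        ∀ x y : ℕ, x ∈ B → y ∈ B → x < y → (∀ z ∈ B, ¬ (x < z ∧ z < y)) →
          (⟨x, y, Finset.Ioo x y ∩ blocksUnion L⟩ : Fence) ∉ 𝓕 := by
  constructor
  · rintro hst L B R rfl x y hx hy hxy hcons hmem
    exact not_stableOSP_of_mem hdown hP hx hy hxy hcons hmem hst
  · intro hgood Q hQ hequiv
    refine hP.length_le_of_forall_subset hQ fun B hB => ?_
    obtain ⟨L, R, rfl⟩ := List.append_of_mem hB
    exact exists_superset_of_forall_consecutive hdown hP
      (fun x hx y hy => hgood L B R rfl x y hx hy) hQ hequiv
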